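/- In any equilibrium (ξ, S) of a discrete single-period Kyle game, either all insider buy orders execute at the maximal true value (S(x+z) = v¹ for all x ∈ E_X ∩ (0,∞), z ∈ E_Z), or the sizes of insider buy orders used with positive probability are bounded by 6 + 6/ζ({1}). -/

import Mathlib

open Finset

/-- Average execution price `∫ S(x+z) ζ(dz)` for an insider order of size `x`. -/
noncomputable def avgPrice (EZ : Finset ℝ) (ζ : ℝ → ℝ) (S : ℝ → ℝ) (x : ℝ) : ℝ :=
  ∑ z ∈ EZ, ζ z * S (x + z)

/-- The insider's expected gain from order `x` when the true value is `v`. -/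
noncomputable def gain (EZ : Finset ℝ) (ζ : ℝ → ℝ) (S : ℝ → ℝ) (v x : ℝ) : ℝ :=
  x * (v - avgPrice EZ ζ S x)

/-- Probability that the total demand equals `y`. -/
noncomputable def pY (EV EX EZ : Finset ℝ) (ν ζ : ℝ → ℝ) (ξ : ℝ → ℝ → ℝ) (y : ℝ) : ℝ :=
  ∑ v ∈ EV, ∑ x ∈ EX, ∑ z ∈ EZ, if x + z = y then ν v * ξ v x * ζ z else 0

/-- Joint expectation of the true value on the event that total demand is `y`. -/
noncomputable def pYV (EV EX EZ : Finset ℝ) (ν ζ : ℝ → ℝ) (ξ : ℝ → ℝ → ℝ) (y : ℝ) : ℝ :=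
  ∑ v ∈ EV, ∑ x ∈ EX, ∑ z ∈ EZ, if x + z = y then ν v * ξ v x * ζ z * v else 0

/-- `ξ` is a behaviour strategy: `ξ(v,·)` is a probability vector on `E_X`. -/
def IsStrategy (EV EX : Finset ℝ) (ξ : ℝ → ℝ → ℝ) : Prop :=
  ∀ v ∈ EV, (∀ x ∈ EX, 0 ≤ ξ v x) ∧ ∑ x ∈ EX, ξ v x = 1

/-- Kyle equilibrium of the single-period discrete game: `ξ(v,·)` is supported on
maximisers of the gain given `S`, and `S` satisfies rational pricing given `ξ`
at every total demand with positive probability. -/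
def IsKyleEquilibrium (EV EX EZ : Finset ℝ) (ν ζ : ℝ → ℝ)
    (ξ : ℝ → ℝ → ℝ) (S : ℝ → ℝ) : Prop :=
  IsStrategy EV EX ξ ∧
  (∀ v ∈ EV, ∀ x ∈ EX, 0 < ξ v x → ∀ x' ∈ EX, gain EZ ζ S v x' ≤ gain EZ ζ S v x) ∧
  (∀ y : ℝ, 0 < pY EV EX EZ ν ζ ξ y →
    S y * pY EV EX EZ ν ζ ξ y = pYV EV EX EZ ν ζ ξ y)


/-!
Suppose some buy order larger than `6 + 6 / ζ{1}` is used. Let `xb` be the largest order used and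
`u` the lowest type trading it. Only the order `xb` reaches total demand `xb + 1`, so
`S (xb + 1) ≥ u`.

If no price `S (xb + z)` lies below `u`, all of them equal `u`, because type `u` does no worse
at `xb` than with the null order; rational pricing at `xb + 1` then gives `u = v¹`, and optimality
of `v¹` with zero gain at `xb` forces every buy order to execute at `v¹`.

Otherwise let `τ > 0` be the largest shortfall `u - S (xb + z)`. Type `u` earns at most
`xb (1 - ζ{1}) τ`, since the shortfall at `z = 1` is nonpositive. Rational pricing at the worst
demand yields a type `v ≤ u - τ` trading within `2` of `xb`; from there, used orders descend in
steps of at most `2` (the grid assumption bridges the steps), so some order `q ≥ xb - 6` is traded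
whose execution prices are all at most `v`. Deviating to `q` earns type `u` at least
`(xb - 6) τ`, hence `xb ζ{1} ≤ 6`.
-/

def IsWeightedMean {ι : Type*} (s : Finset ι) (a f : ι → ℝ) (m : ℝ) : Prop :=
  (∀ i ∈ s, 0 ≤ a i) ∧ 0 < ∑ i ∈ s, a i ∧ ∑ i ∈ s, a i * f i = m * ∑ i ∈ s, a i

namespace IsWeightedMean

variable {ι : Type*} {s : Finset ι} {a f : ι → ℝ} {m c : ℝ}

theorem neg (h : IsWeightedMean s a f m) : IsWeightedMean s a (-f) (-m) :=
  ⟨h.1, h.2.1, by simp only [Pi.neg_apply, mul_neg, sum_neg_distrib, neg_mul, h.2.2]⟩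

theorem le_of_forall_le (h : IsWeightedMean s a f m) (hc : ∀ i ∈ s, 0 < a i → f i ≤ c) :
    m ≤ c := by
  obtain ⟨ha, hpos, hm⟩ := h
  refine le_of_mul_le_mul_right ?_ hpos
  rw [← hm, mul_sum]
  refine sum_le_sum fun i hi => ?_
  rcases (ha i hi).eq_or_lt with h0 | h0
  · simp [← h0]
  · rw [mul_comm c]
    exact mul_le_mul_of_nonneg_left (hc i hi h0) h0.le

theorem ge_of_forall_ge (h : IsWeightedMean s a f m) (hc : ∀ i ∈ s, 0 < a i → c ≤ f i) :
    c ≤ m :=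
  neg_le_neg_iff.1 <| h.neg.le_of_forall_le fun i hi hai => neg_le_neg (hc i hi hai)

theorem eq_of_forall_le (h : IsWeightedMean s a f m) (hc : ∀ i ∈ s, 0 < a i → m ≤ f i) :
    ∀ i ∈ s, 0 < a i → f i = m := by
  obtain ⟨ha, -, hm⟩ := h
  have hterm : ∀ i ∈ s, 0 ≤ a i * (f i - m) := fun i hi =>
    (ha i hi).eq_or_lt.elim (fun h0 => by simp [← h0])
      fun h0 => mul_nonneg h0.le (sub_nonneg.2 (hc i hi h0))
  have hsum : ∑ i ∈ s, a i * (f i - m) = 0 := by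
    simp only [mul_sub, sum_sub_distrib, hm, ← sum_mul]
    ring
  intro i hi hai
  rcases mul_eq_zero.1 ((sum_eq_zero_iff_of_nonneg hterm).1 hsum i hi) with h0 | h0
  · exact absurd h0 hai.ne'
  · linarith

theorem eq_of_forall_ge (h : IsWeightedMean s a f m) (hc : ∀ i ∈ s, 0 < a i → f i ≤ m) :
    ∀ i ∈ s, 0 < a i → f i = m := fun i hi hai =>
  neg_inj.1 <| h.neg.eq_of_forall_le (fun j hj haj => neg_le_neg (hc j hj haj)) i hi hai

theorem exists_lt_of_lt (h : IsWeightedMean s a f m) {i : ι} (hi : i ∈ s) (hai : 0 < a i)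
    (hlt : m < f i) : ∃ j ∈ s, 0 < a j ∧ f j < m := by
  by_contra! hge
  exact hlt.ne' (h.eq_of_forall_le hge i hi hai)

theorem exists_le (h : IsWeightedMean s a f m) : ∃ i ∈ s, 0 < a i ∧ f i ≤ m := by
  obtain ⟨i, hi, hai⟩ : ∃ i ∈ s, 0 < a i :=
    exists_lt_of_sum_lt (by simpa only [sum_const_zero] using h.2.1)
  by_contra! hgt
  obtain ⟨j, hj, haj, hlt⟩ := h.exists_lt_of_lt hi hai (hgt i hi hai)
  exact (hgt j hj haj).not_gt hlt

end IsWeightedMean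

def IsBestResponse (EV EX EZ : Finset ℝ) (ζ : ℝ → ℝ) (ξ : ℝ → ℝ → ℝ) (S : ℝ → ℝ) : Prop :=
  ∀ v ∈ EV, ∀ x ∈ EX, 0 < ξ v x → ∀ x' ∈ EX, gain EZ ζ S v x' ≤ gain EZ ζ S v x

def IsRationalPricing (EV EX EZ : Finset ℝ) (ν ζ : ℝ → ℝ) (ξ : ℝ → ℝ → ℝ) (S : ℝ → ℝ) :
    Prop :=
  ∀ y : ℝ, 0 < pY EV EX EZ ν ζ ξ y → S y * pY EV EX EZ ν ζ ξ y = pYV EV EX EZ ν ζ ξ y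

noncomputable def tradeWeight (ν ζ : ℝ → ℝ) (ξ : ℝ → ℝ → ℝ) (y : ℝ) (i : ℝ × ℝ × ℝ) : ℝ :=
  if i.2.1 + i.2.2 = y then ν i.1 * ξ i.1 i.2.1 * ζ i.2.2 else 0

/-- A rung of the ladder along which used orders descend in steps of at most `2`
(see `IsRung.exists_lower`). -/
def IsRung (EV EX : Finset ℝ) (ξ : ℝ → ℝ → ℝ) (w p : ℝ) : Prop :=
  w ∈ EV ∧ p ∈ EX ∧ 0 < ξ w p ∧
    ∃ wh ∈ EV, ∃ ph ∈ EX, 0 < ξ wh ph ∧ w < wh ∧ p ≤ ph ∧ ph ≤ p + 2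

section KyleGame

variable {EV EX EZ : Finset ℝ} {ν ζ : ℝ → ℝ} {ξ : ℝ → ℝ → ℝ} {S : ℝ → ℝ}

theorem IsKyleEquilibrium.nonneg (heq : IsKyleEquilibrium EV EX EZ ν ζ ξ S) :
    ∀ v ∈ EV, ∀ x ∈ EX, 0 ≤ ξ v x := fun v hv => (heq.1 v hv).1

theorem IsStrategy.exists_pos (hξ : IsStrategy EV EX ξ) {v : ℝ} (hv : v ∈ EV) :
    ∃ x ∈ EX, 0 < ξ v x :=
  exists_lt_of_sum_lt (by simp [(hξ v hv).2])

theorem exists_top_trade {v₀ x₀ : ℝ} (hv₀ : v₀ ∈ EV) (hx₀ : x₀ ∈ EX) (h₀ : 0 < ξ v₀ x₀) :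
    ∃ xb ∈ EX, ∃ u ∈ EV, 0 < ξ u xb ∧ x₀ ≤ xb ∧
      (∀ v ∈ EV, ∀ x ∈ EX, 0 < ξ v x → x ≤ xb) ∧ ∀ v ∈ EV, 0 < ξ v xb → u ≤ v := by
  classical
  obtain ⟨⟨v₁, xb⟩, h₁, hmax⟩ := ((EV ×ˢ EX).filter fun i => 0 < ξ i.1 i.2).exists_max_image
    Prod.snd ⟨(v₀, x₀), by simp [hv₀, hx₀, h₀]⟩
  simp only [mem_filter, mem_product] at h₁
  obtain ⟨u, hu, hmin⟩ := (EV.filter fun v => 0 < ξ v xb).exists_min_image id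
    ⟨v₁, by simp [h₁]⟩
  simp only [mem_filter] at hu
  refine ⟨xb, h₁.1.2, u, hu.1, hu.2, hmax (v₀, x₀) (by simp [hv₀, hx₀, h₀]),
    fun v hv x hx h => hmax (v, x) (by simp [hv, hx, h]), fun v hv h => hmin v (by simp [hv, h])⟩

theorem IsBestResponse.avgPrice_le (hbest : IsBestResponse EV EX EZ ζ ξ S)
    (hX0 : (0 : ℝ) ∈ EX) {v x : ℝ} (hv : v ∈ EV) (hx : x ∈ EX) (htr : 0 < ξ v x)
    (hxpos : 0 < x) : avgPrice EZ ζ S x ≤ v := by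
  have h := hbest v hv x hx htr 0 hX0
  simp only [gain, zero_mul] at h
  exact sub_nonneg.1 (nonneg_of_mul_nonneg_right h hxpos)

/-- Single crossing: adding the optimality conditions of both types gives
`(x' - x) (v' - v) ≥ 0`. -/
theorem IsBestResponse.le_of_lt (hbest : IsBestResponse EV EX EZ ζ ξ S) {v x v' x' : ℝ}
    (hv : v ∈ EV) (hx : x ∈ EX) (htr : 0 < ξ v x) (hv' : v' ∈ EV) (hx' : x' ∈ EX)
    (htr' : 0 < ξ v' x') (hlt : v < v') : x ≤ x' := by
  have h := hbest v hv x hx htr x' hx'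
  have h' := hbest v' hv' x' hx' htr' x hx
  simp only [gain] at h h'
  nlinarith

theorem IsBestResponse.trades_top_of_le (hbest : IsBestResponse EV EX EZ ζ ξ S)
    (hstrat : IsStrategy EV EX ξ) {xb v₀ v : ℝ} (hxb : xb ∈ EX)
    (htop : ∀ v ∈ EV, ∀ x ∈ EX, 0 < ξ v x → x ≤ xb) (hv₀ : v₀ ∈ EV) (h₀ : 0 < ξ v₀ xb)
    (hv : v ∈ EV) (hle : v₀ ≤ v) : 0 < ξ v xb := by
  rcases hle.eq_or_lt with rfl | hlt
  · exact h₀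
  obtain ⟨x, hx, htr⟩ := hstrat.exists_pos hv
  obtain rfl : x = xb :=
    le_antisymm (htop v hv x hx htr) (hbest.le_of_lt hv₀ hxb h₀ hv hx htr hlt)
  exact htr

theorem le_of_reaches_top_add_one (hZ : ∀ z ∈ EZ, -1 ≤ z ∧ z ≤ 1) {xb u : ℝ}
    (htop : ∀ v ∈ EV, ∀ x ∈ EX, 0 < ξ v x → x ≤ xb) (hmin : ∀ v ∈ EV, 0 < ξ v xb → u ≤ v) :
    ∀ v ∈ EV, ∀ x ∈ EX, ∀ z ∈ EZ, x + z = xb + 1 → 0 < ξ v x → u ≤ v := by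
  intro v hv x hx z hz hxz htr
  obtain rfl : x = xb := by linarith [htop v hv x hx htr, (hZ z hz).2]
  exact hmin v hv htr

theorem isWeightedMean_avgPrice (hζ : ∀ z ∈ EZ, 0 < ζ z) (hζ1 : ∑ z ∈ EZ, ζ z = 1) (x : ℝ) :
    IsWeightedMean EZ ζ (fun z => S (x + z)) (avgPrice EZ ζ S x) :=
  ⟨fun z hz => (hζ z hz).le, hζ1 ▸ one_pos, by rw [hζ1, mul_one]; rfl⟩

theorem sub_avgPrice_le (hζ : ∀ z ∈ EZ, 0 < ζ z) (hζ1 : ∑ z ∈ EZ, ζ z = 1) (hZp : (1 : ℝ) ∈ EZ)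
    {x c τ : ℝ} (hτ : ∀ z ∈ EZ, c - τ ≤ S (x + z)) (h1 : c ≤ S (x + 1)) :
    c - avgPrice EZ ζ S x ≤ (1 - ζ 1) * τ := by
  have hmean : c - avgPrice EZ ζ S x = ∑ z ∈ EZ, ζ z * (c - S (x + z)) := by
    simp only [avgPrice, mul_sub, sum_sub_distrib, ← sum_mul, hζ1, one_mul]
  have hsplit := add_sum_erase EZ (fun z => ζ z * (c - S (x + z))) hZp
  have hrest : ∑ z ∈ EZ.erase 1, ζ z * (c - S (x + z)) ≤ (1 - ζ 1) * τ := by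
    rw [← add_sum_erase EZ ζ hZp] at hζ1
    rw [show 1 - ζ 1 = ∑ z ∈ EZ.erase 1, ζ z by linarith, sum_mul]
    refine sum_le_sum fun z hz => ?_
    have hzEZ := mem_of_mem_erase hz
    exact mul_le_mul_of_nonneg_left (by linarith [hτ z hzEZ]) (hζ z hzEZ).le
  have hone : ζ 1 * (c - S (x + 1)) ≤ 0 :=
    mul_nonpos_of_nonneg_of_nonpos (hζ 1 hZp).le (sub_nonpos.2 h1)
  linarith

theorem IsBestResponse.prices_eq_of_avgPrice_eq (hbest : IsBestResponse EV EX EZ ζ ξ S)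
    (hζ : ∀ z ∈ EZ, 0 < ζ z) (hζ1 : ∑ z ∈ EZ, ζ z = 1) {M xb : ℝ} (hM : M ∈ EV)
    (hxb : xb ∈ EX) (htr : 0 < ξ M xb) (hA : avgPrice EZ ζ S xb = M) (hSle : ∀ y, S y ≤ M) :
    ∀ x ∈ EX, 0 < x → ∀ z ∈ EZ, S (x + z) = M := by
  intro x hx hxpos
  have hgain := hbest M hM xb hxb htr x hx
  simp only [gain, hA, sub_self, mul_zero] at hgain
  have hMA : M ≤ avgPrice EZ ζ S x := sub_nonpos.1 (nonpos_of_mul_nonpos_right hgain hxpos)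
  have hmean := isWeightedMean_avgPrice (S := S) hζ hζ1 x
  have hAM : avgPrice EZ ζ S x = M :=
    le_antisymm (hmean.le_of_forall_le fun z _ _ => hSle _) hMA
  exact fun z hz => hAM ▸ hmean.eq_of_forall_ge (fun z _ _ => hAM ▸ hSle _) z hz (hζ z hz)

theorem pY_eq_sum_tradeWeight (y : ℝ) :
    pY EV EX EZ ν ζ ξ y = ∑ i ∈ EV ×ˢ EX ×ˢ EZ, tradeWeight ν ζ ξ y i := by
  simp only [pY, tradeWeight, sum_product]

theorem pYV_eq_sum_tradeWeight (y : ℝ) :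
    pYV EV EX EZ ν ζ ξ y = ∑ i ∈ EV ×ˢ EX ×ˢ EZ, tradeWeight ν ζ ξ y i * i.1 := by
  simp only [pYV, tradeWeight, sum_product, ite_mul, zero_mul]

section Pricing

variable {y : ℝ}

theorem tradeWeight_nonneg (hν : ∀ v ∈ EV, 0 < ν v) (hζ : ∀ z ∈ EZ, 0 < ζ z)
    (hξ : ∀ v ∈ EV, ∀ x ∈ EX, 0 ≤ ξ v x) {i : ℝ × ℝ × ℝ} (hi : i ∈ EV ×ˢ EX ×ˢ EZ) :
    0 ≤ tradeWeight ν ζ ξ y i := by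
  simp only [mem_product] at hi
  unfold tradeWeight
  split_ifs
  · exact mul_nonneg (mul_nonneg (hν _ hi.1).le (hξ _ hi.1 _ hi.2.1)) (hζ _ hi.2.2).le
  · exact le_rfl

theorem tradeWeight_pos_iff (hν : ∀ v ∈ EV, 0 < ν v) (hζ : ∀ z ∈ EZ, 0 < ζ z) {v x z : ℝ}
    (hv : v ∈ EV) (hz : z ∈ EZ) :
    0 < tradeWeight ν ζ ξ y (v, x, z) ↔ x + z = y ∧ 0 < ξ v x := by
  unfold tradeWeight
  split_ifs with hxz
  · simp [hxz, hν v hv, hζ z hz]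
  · simp [hxz]

theorem pY_pos (hν : ∀ v ∈ EV, 0 < ν v) (hζ : ∀ z ∈ EZ, 0 < ζ z)
    (hξ : ∀ v ∈ EV, ∀ x ∈ EX, 0 ≤ ξ v x) {v x z : ℝ} (hv : v ∈ EV) (hx : x ∈ EX) (hz : z ∈ EZ)
    (hxz : x + z = y) (htr : 0 < ξ v x) : 0 < pY EV EX EZ ν ζ ξ y := by
  rw [pY_eq_sum_tradeWeight]
  exact sum_pos' (fun i hi => tradeWeight_nonneg hν hζ hξ hi)
    ⟨(v, x, z), by simp [hv, hx, hz], (tradeWeight_pos_iff hν hζ hv hz).2 ⟨hxz, htr⟩⟩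

theorem IsRationalPricing.isWeightedMean (hS : IsRationalPricing EV EX EZ ν ζ ξ S)
    (hν : ∀ v ∈ EV, 0 < ν v) (hζ : ∀ z ∈ EZ, 0 < ζ z) (hξ : ∀ v ∈ EV, ∀ x ∈ EX, 0 ≤ ξ v x)
    (hpY : 0 < pY EV EX EZ ν ζ ξ y) :
    IsWeightedMean (EV ×ˢ EX ×ˢ EZ) (tradeWeight ν ζ ξ y) Prod.fst (S y) := by
  refine ⟨fun i hi => tradeWeight_nonneg hν hζ hξ hi, pY_eq_sum_tradeWeight y ▸ hpY, ?_⟩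
  rw [← pY_eq_sum_tradeWeight, ← pYV_eq_sum_tradeWeight, hS y hpY]

theorem IsRationalPricing.price_le (hS : IsRationalPricing EV EX EZ ν ζ ξ S)
    (hν : ∀ v ∈ EV, 0 < ν v) (hζ : ∀ z ∈ EZ, 0 < ζ z) (hξ : ∀ v ∈ EV, ∀ x ∈ EX, 0 ≤ ξ v x)
    (hpY : 0 < pY EV EX EZ ν ζ ξ y) {c : ℝ}
    (hc : ∀ v ∈ EV, ∀ x ∈ EX, ∀ z ∈ EZ, x + z = y → 0 < ξ v x → v ≤ c) : S y ≤ c :=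
  (hS.isWeightedMean hν hζ hξ hpY).le_of_forall_le fun ⟨v, x, z⟩ hi hpos => by
    simp only [mem_product] at hi
    obtain ⟨hxz, htr⟩ := (tradeWeight_pos_iff hν hζ hi.1 hi.2.2).1 hpos
    exact hc v hi.1 x hi.2.1 z hi.2.2 hxz htr

theorem IsRationalPricing.le_price (hS : IsRationalPricing EV EX EZ ν ζ ξ S)
    (hν : ∀ v ∈ EV, 0 < ν v) (hζ : ∀ z ∈ EZ, 0 < ζ z) (hξ : ∀ v ∈ EV, ∀ x ∈ EX, 0 ≤ ξ v x)
    (hpY : 0 < pY EV EX EZ ν ζ ξ y) {c : ℝ}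
    (hc : ∀ v ∈ EV, ∀ x ∈ EX, ∀ z ∈ EZ, x + z = y → 0 < ξ v x → c ≤ v) : c ≤ S y :=
  (hS.isWeightedMean hν hζ hξ hpY).ge_of_forall_ge fun ⟨v, x, z⟩ hi hpos => by
    simp only [mem_product] at hi
    obtain ⟨hxz, htr⟩ := (tradeWeight_pos_iff hν hζ hi.1 hi.2.2).1 hpos
    exact hc v hi.1 x hi.2.1 z hi.2.2 hxz htr

theorem IsRationalPricing.exists_le_price (hS : IsRationalPricing EV EX EZ ν ζ ξ S)
    (hν : ∀ v ∈ EV, 0 < ν v) (hζ : ∀ z ∈ EZ, 0 < ζ z) (hξ : ∀ v ∈ EV, ∀ x ∈ EX, 0 ≤ ξ v x)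
    (hpY : 0 < pY EV EX EZ ν ζ ξ y) :
    ∃ v ∈ EV, ∃ x ∈ EX, ∃ z ∈ EZ, x + z = y ∧ 0 < ξ v x ∧ v ≤ S y := by
  obtain ⟨⟨v, x, z⟩, hi, hpos, hle⟩ := (hS.isWeightedMean hν hζ hξ hpY).exists_le
  simp only [mem_product] at hi
  obtain ⟨hxz, htr⟩ := (tradeWeight_pos_iff hν hζ hi.1 hi.2.2).1 hpos
  exact ⟨v, hi.1, x, hi.2.1, z, hi.2.2, hxz, htr, hle⟩

theorem IsRationalPricing.exists_lt_price (hS : IsRationalPricing EV EX EZ ν ζ ξ S)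
    (hν : ∀ v ∈ EV, 0 < ν v) (hζ : ∀ z ∈ EZ, 0 < ζ z) (hξ : ∀ v ∈ EV, ∀ x ∈ EX, 0 ≤ ξ v x)
    {v x z : ℝ} (hv : v ∈ EV) (hx : x ∈ EX) (hz : z ∈ EZ) (hxz : x + z = y) (htr : 0 < ξ v x)
    (hlt : S y < v) : ∃ v' ∈ EV, ∃ x' ∈ EX, ∃ z' ∈ EZ, x' + z' = y ∧ 0 < ξ v' x' ∧ v' < S y := by
  have hmean := hS.isWeightedMean hν hζ hξ (pY_pos hν hζ hξ hv hx hz hxz htr)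
  obtain ⟨⟨v', x', z'⟩, hi, hpos, hlt'⟩ := hmean.exists_lt_of_lt (i := (v, x, z))
    (by simp [hv, hx, hz]) ((tradeWeight_pos_iff hν hζ hv hz).2 ⟨hxz, htr⟩) hlt
  simp only [mem_product] at hi
  obtain ⟨hxz', htr'⟩ := (tradeWeight_pos_iff hν hζ hi.1 hi.2.2).1 hpos
  exact ⟨v', hi.1, x', hi.2.1, z', hi.2.2, hxz', htr', hlt'⟩

end Pricing

theorem IsKyleEquilibrium.bestResponse (heq : IsKyleEquilibrium EV EX EZ ν ζ ξ S) :
    IsBestResponse EV EX EZ ζ ξ S :=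
  heq.2.1

theorem IsKyleEquilibrium.pricing (heq : IsKyleEquilibrium EV EX EZ ν ζ ξ S) :
    IsRationalPricing EV EX EZ ν ζ ξ S :=
  heq.2.2

section Equilibrium

variable {w p : ℝ}

theorem IsKyleEquilibrium.price_le_of_add_one_lt (heq : IsKyleEquilibrium EV EX EZ ν ζ ξ S)
    (hν : ∀ v ∈ EV, 0 < ν v) (hζ : ∀ z ∈ EZ, 0 < ζ z) (hZ : ∀ z ∈ EZ, -1 ≤ z ∧ z ≤ 1)
    (hw : w ∈ EV) (hp : p ∈ EX) (htr : 0 < ξ w p) {y : ℝ}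
    (hpY : 0 < pY EV EX EZ ν ζ ξ y) (hy : y + 1 < p) : S y ≤ w :=
  heq.pricing.price_le hν hζ heq.nonneg hpY fun v hv x hx z hz hxz htrv => le_of_not_gt
    fun hlt => by linarith [heq.bestResponse.le_of_lt hw hp htr hv hx htrv hlt, (hZ z hz).1]

theorem IsRung.exists_lower (h : IsRung EV EX ξ w p) (heq : IsKyleEquilibrium EV EX EZ ν ζ ξ S)
    (hν : ∀ v ∈ EV, 0 < ν v) (hζ : ∀ z ∈ EZ, 0 < ζ z) (hζ1 : ∑ z ∈ EZ, ζ z = 1)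
    (hX0 : (0 : ℝ) ∈ EX) (hZ : ∀ z ∈ EZ, -1 ≤ z ∧ z ≤ 1) (hZp : (1 : ℝ) ∈ EZ)
    (hgrid : ∀ x1 ∈ EX, ∀ x2 ∈ EX, ∀ z1 ∈ EZ,
      x1 + z1 - 1 ≤ x2 → x2 ≤ x1 + z1 + 1 → ∃ z2 ∈ EZ, x2 + z2 = x1 + z1)
    (hp : 0 < p) : ∃ w' p', IsRung EV EX ξ w' p' ∧ w' < w ∧ p - 2 ≤ p' := by
  obtain ⟨hw, hpX, htr, wh, hwh, ph, hph, htrh, hwwh, hpph, hph2⟩ := h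
  by_cases hcheap : ∃ z ∈ EZ, S (p + z) < w
  · obtain ⟨z, hz, hlt⟩ := hcheap
    obtain ⟨w', hw', p', hp', z', hz', hsum, htr', hle⟩ := heq.pricing.exists_le_price hν hζ
      heq.nonneg (pY_pos hν hζ heq.nonneg hw hpX hz rfl htr)
    have hw'w : w' < w := hle.trans_lt hlt
    have hp'p : p' ≤ p := heq.bestResponse.le_of_lt hw' hp' htr' hw hpX htr hw'w
    have hpp' : p - 2 ≤ p' := by linarith [(hZ z hz).1, (hZ z' hz').2]
    exact ⟨w', p', ⟨hw', hp', htr', w, hw, p, hpX, htr, hw'w, hp'p, by linarith⟩, hw'w, hpp'⟩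
  -- Otherwise all prices around `p` equal `w`, and the higher type `wh` reaches demand `p + 1`.
  push Not at hcheap
  have hmean := isWeightedMean_avgPrice (S := S) hζ hζ1 p
  have hAw : avgPrice EZ ζ S p = w := le_antisymm
    (heq.bestResponse.avgPrice_le hX0 hw hpX htr hp)
    (hmean.ge_of_forall_ge fun z hz _ => hcheap z hz)
  have hS1 : S (p + 1) = w :=
    (hmean.eq_of_forall_le (fun z hz _ => hAw ▸ hcheap z hz) 1 hZp (hζ 1 hZp)).trans hAw
  obtain ⟨z₂, hz₂, hphz⟩ := hgrid p hpX ph hph 1 hZp (by linarith) (by linarith)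
  obtain ⟨w', hw', p', hp', z', hz', hsum, htr', hlt⟩ := heq.pricing.exists_lt_price hν hζ
    heq.nonneg hwh hph hz₂ hphz htrh (hS1 ▸ hwwh)
  rw [hS1] at hlt
  have hp'p : p' ≤ p := heq.bestResponse.le_of_lt hw' hp' htr' hw hpX htr hlt
  have hpp' : p ≤ p' := by linarith [(hZ z' hz').2]
  exact ⟨w', p', ⟨hw', hp', htr', wh, hwh, ph, hph, htrh, hlt.trans hwwh, by linarith, by linarith⟩,
    hlt, by linarith⟩

theorem IsRung.exists_trade_mem_Ico (h : IsRung EV EX ξ w p)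
    (heq : IsKyleEquilibrium EV EX EZ ν ζ ξ S)
    (hν : ∀ v ∈ EV, 0 < ν v) (hζ : ∀ z ∈ EZ, 0 < ζ z) (hζ1 : ∑ z ∈ EZ, ζ z = 1)
    (hX0 : (0 : ℝ) ∈ EX) (hZ : ∀ z ∈ EZ, -1 ≤ z ∧ z ≤ 1) (hZp : (1 : ℝ) ∈ EZ)
    (hgrid : ∀ x1 ∈ EX, ∀ x2 ∈ EX, ∀ z1 ∈ EZ,
      x1 + z1 - 1 ≤ x2 → x2 ≤ x1 + z1 + 1 → ∃ z2 ∈ EZ, x2 + z2 = x1 + z1)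
    {t : ℝ} (ht : 0 < t) (htp : t ≤ p) :
    ∃ q ∈ EX, (∃ v ∈ EV, 0 < ξ v q) ∧ q ∈ Set.Ico t (t + 2) := by
  classical
  -- The lowest rung at or above `t` lies below `t + 2`, since otherwise it has a lower rung.
  obtain ⟨w₀, hw₀, hmin⟩ := (EV.filter fun w => ∃ p, IsRung EV EX ξ w p ∧ t ≤ p).exists_min_image
    id ⟨w, mem_filter.2 ⟨h.1, p, h, htp⟩⟩
  obtain ⟨-, p₀, hrung, htp₀⟩ := mem_filter.1 hw₀
  rcases lt_or_ge p₀ (t + 2) with hlt | hge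
  · exact ⟨p₀, hrung.2.1, ⟨w₀, hrung.1, hrung.2.2.1⟩, htp₀, hlt⟩
  obtain ⟨w', p', hrung', hlt, hp'⟩ :=
    hrung.exists_lower heq hν hζ hζ1 hX0 hZ hZp hgrid (by linarith)
  exact absurd (hmin w' (mem_filter.2 ⟨hrung'.1, p', hrung', by linarith⟩)) (not_le.2 hlt)

theorem IsRung.exists_avgPrice_le (h : IsRung EV EX ξ w p)
    (heq : IsKyleEquilibrium EV EX EZ ν ζ ξ S)
    (hν : ∀ v ∈ EV, 0 < ν v) (hζ : ∀ z ∈ EZ, 0 < ζ z) (hζ1 : ∑ z ∈ EZ, ζ z = 1)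
    (hX0 : (0 : ℝ) ∈ EX) (hZ : ∀ z ∈ EZ, -1 ≤ z ∧ z ≤ 1) (hZp : (1 : ℝ) ∈ EZ)
    (hgrid : ∀ x1 ∈ EX, ∀ x2 ∈ EX, ∀ z1 ∈ EZ,
      x1 + z1 - 1 ≤ x2 → x2 ≤ x1 + z1 + 1 → ∃ z2 ∈ EZ, x2 + z2 = x1 + z1)
    {t : ℝ} (ht : 0 < t) (htp : t + 4 ≤ p) :
    ∃ q ∈ EX, t ≤ q ∧ avgPrice EZ ζ S q ≤ w := by
  obtain ⟨q, hq, ⟨v, hv, htrq⟩, hqt, hqt2⟩ :=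
    h.exists_trade_mem_Ico heq hν hζ hζ1 hX0 hZ hZp hgrid ht (by linarith)
  refine ⟨q, hq, hqt, (isWeightedMean_avgPrice hζ hζ1 q).le_of_forall_le fun z hz _ => ?_⟩
  exact heq.price_le_of_add_one_lt hν hζ hZ h.1 h.2.1 h.2.2.1
    (pY_pos hν hζ heq.nonneg hv hq hz rfl htrq) (by linarith [(hZ z hz).2])

end Equilibrium

section TopTrade

variable {xb u : ℝ}

theorem IsKyleEquilibrium.prices_eq_max (heq : IsKyleEquilibrium EV EX EZ ν ζ ξ S)
    (hν : ∀ v ∈ EV, 0 < ν v) (hζ : ∀ z ∈ EZ, 0 < ζ z) (hζ1 : ∑ z ∈ EZ, ζ z = 1)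
    (hX0 : (0 : ℝ) ∈ EX) (hZ : ∀ z ∈ EZ, -1 ≤ z ∧ z ≤ 1) (hZp : (1 : ℝ) ∈ EZ)
    (hEV : EV.Nonempty) (hSle : ∀ y, S y ≤ EV.max' hEV)
    (hxb : xb ∈ EX) (hxbpos : 0 < xb) (hu : u ∈ EV) (htr : 0 < ξ u xb)
    (htop : ∀ v ∈ EV, ∀ x ∈ EX, 0 < ξ v x → x ≤ xb) (hmin : ∀ v ∈ EV, 0 < ξ v xb → u ≤ v)
    (hge : ∀ z ∈ EZ, u ≤ S (xb + z)) :
    ∀ x ∈ EX, 0 < x → ∀ z ∈ EZ, S (x + z) = EV.max' hEV := by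
  have hmean := isWeightedMean_avgPrice (S := S) hζ hζ1 xb
  have hA : avgPrice EZ ζ S xb = u := le_antisymm
    (heq.bestResponse.avgPrice_le hX0 hu hxb htr hxbpos)
    (hmean.ge_of_forall_ge fun z hz _ => hge z hz)
  have hS1 : S (xb + 1) = u :=
    (hmean.eq_of_forall_le (fun z hz _ => hA ▸ hge z hz) 1 hZp (hζ 1 hZp)).trans hA
  have hMtr : 0 < ξ (EV.max' hEV) xb :=
    heq.bestResponse.trades_top_of_le heq.1 hxb htop hu htr (EV.max'_mem hEV) (EV.le_max' u hu)
  have huM : u = EV.max' hEV := by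
    by_contra hne
    obtain ⟨v, hv, x, hx, z, hz, hxz, htrv, hlt⟩ := heq.pricing.exists_lt_price hν hζ heq.nonneg
      (EV.max'_mem hEV) hxb hZp rfl hMtr (hS1 ▸ (EV.le_max' u hu).lt_of_ne hne)
    exact (le_of_reaches_top_add_one hZ htop hmin v hv x hx z hz hxz htrv).not_gt (hS1 ▸ hlt)
  exact heq.bestResponse.prices_eq_of_avgPrice_eq hζ hζ1 (EV.max'_mem hEV) hxb hMtr
    (hA.trans huM) hSle

theorem IsKyleEquilibrium.mul_zeta_one_le_six_of_price_lt
    (heq : IsKyleEquilibrium EV EX EZ ν ζ ξ S)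
    (hν : ∀ v ∈ EV, 0 < ν v) (hζ : ∀ z ∈ EZ, 0 < ζ z) (hζ1 : ∑ z ∈ EZ, ζ z = 1)
    (hX0 : (0 : ℝ) ∈ EX) (hZ : ∀ z ∈ EZ, -1 ≤ z ∧ z ≤ 1) (hZp : (1 : ℝ) ∈ EZ)
    (hgrid : ∀ x1 ∈ EX, ∀ x2 ∈ EX, ∀ z1 ∈ EZ,
      x1 + z1 - 1 ≤ x2 → x2 ≤ x1 + z1 + 1 → ∃ z2 ∈ EZ, x2 + z2 = x1 + z1)
    (hxb : xb ∈ EX) (hxb6 : 6 < xb) (hu : u ∈ EV) (htr : 0 < ξ u xb)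
    (htop : ∀ v ∈ EV, ∀ x ∈ EX, 0 < ξ v x → x ≤ xb) (hmin : ∀ v ∈ EV, 0 < ξ v xb → u ≤ v)
    {z₀ : ℝ} (hz₀ : z₀ ∈ EZ) (hlt : S (xb + z₀) < u) :
    xb * ζ 1 ≤ 6 := by
  obtain ⟨zs, hzs, hzs_min⟩ := EZ.exists_min_image (fun z => S (xb + z)) ⟨z₀, hz₀⟩
  set τ := u - S (xb + zs)
  have hτ : 0 < τ := by linarith [hzs_min z₀ hz₀]
  have hS1 : u ≤ S (xb + 1) := heq.pricing.le_price hν hζ heq.nonneg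
    (pY_pos hν hζ heq.nonneg hu hxb hZp rfl htr) (le_of_reaches_top_add_one hZ htop hmin)
  have hgain : u - avgPrice EZ ζ S xb ≤ (1 - ζ 1) * τ :=
    sub_avgPrice_le hζ hζ1 hZp (fun z hz => by linarith [hzs_min z hz]) hS1
  obtain ⟨v₁, hv₁, p₁, hp₁, z₁, hz₁, hpz, htr₁, hv₁le⟩ := heq.pricing.exists_le_price hν hζ
    heq.nonneg (pY_pos hν hζ heq.nonneg hu hxb hzs rfl htr)
  have hrung : IsRung EV EX ξ v₁ p₁ := ⟨hv₁, hp₁, htr₁, u, hu, xb, hxb, htr, by linarith,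
    htop v₁ hv₁ p₁ hp₁ htr₁, by linarith [(hZ zs hzs).1, (hZ z₁ hz₁).2]⟩
  obtain ⟨q, hq, hqt, hAq⟩ := hrung.exists_avgPrice_le heq hν hζ hζ1 hX0 hZ hZp hgrid
    (t := xb - 6) (by linarith) (by linarith [(hZ zs hzs).1, (hZ z₁ hz₁).2])
  have hdev := heq.bestResponse u hu xb hxb htr q hq
  simp only [gain] at hdev
  have hτ_le : (xb - 6) * τ ≤ xb * ((1 - ζ 1) * τ) := calc
    (xb - 6) * τ ≤ q * τ := by gcongr
    _ ≤ q * (u - avgPrice EZ ζ S q) := mul_le_mul_of_nonneg_left (by linarith) (by linarith)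
    _ ≤ xb * (u - avgPrice EZ ζ S xb) := hdev
    _ ≤ xb * ((1 - ζ 1) * τ) := by gcongr
  nlinarith

end TopTrade

end KyleGame

theorem insider_buy_orders_bounded
    (EV EX EZ : Finset ℝ) (hEV : EV.Nonempty)
    (ν ζ : ℝ → ℝ)
    (hν : ∀ v ∈ EV, 0 < ν v)
    (hζ : ∀ z ∈ EZ, 0 < ζ z) (hζ1 : ∑ z ∈ EZ, ζ z = 1)
    (hZp : (1 : ℝ) ∈ EZ)
    (hZsub : ∀ z ∈ EZ, -1 ≤ z ∧ z ≤ 1)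
    (hX0 : (0 : ℝ) ∈ EX)
    (hgrid : ∀ x1 ∈ EX, ∀ x2 ∈ EX, ∀ z1 ∈ EZ,
      x1 + z1 - 1 ≤ x2 → x2 ≤ x1 + z1 + 1 → ∃ z2 ∈ EZ, x2 + z2 = x1 + z1)
    (ξ : ℝ → ℝ → ℝ) (S : ℝ → ℝ)
    (hSrange : ∀ y, EV.min' hEV ≤ S y ∧ S y ≤ EV.max' hEV)
    (heq : IsKyleEquilibrium EV EX EZ ν ζ ξ S) :
    (∀ x ∈ EX, 0 < x → ∀ z ∈ EZ, S (x + z) = EV.max' hEV) ∨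
    (∀ x ∈ EX, (∃ v ∈ EV, 0 < ξ v x) → 0 < x → x ≤ 6 + 6 / ζ 1) := by
  refine or_iff_not_imp_right.2 fun hbig => ?_
  push Not at hbig
  obtain ⟨xs, hxs, ⟨v₀, hv₀, htr₀⟩, -, hxs_big⟩ := hbig
  obtain ⟨xb, hxb, u, hu, htr, hxs_le, htop, hmin⟩ := exists_top_trade hv₀ hxs htr₀
  have hζ1pos : 0 < ζ 1 := hζ 1 hZp
  have h6 : 6 < xb := by linarith [div_pos (by norm_num : (0 : ℝ) < 6) hζ1pos]
  by_cases hge : ∀ z ∈ EZ, u ≤ S (xb + z)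
  · exact heq.prices_eq_max hν hζ hζ1 hX0 hZsub hZp hEV (fun y => (hSrange y).2) hxb
      (by linarith) hu htr htop hmin hge
  push Not at hge
  obtain ⟨z₀, hz₀, hlt⟩ := hge
  have hle : xb ≤ 6 / ζ 1 := (le_div_iff₀ hζ1pos).2 <| heq.mul_zeta_one_le_six_of_price_lt
    hν hζ hζ1 hX0 hZsub hZp hgrid hxb h6 hu htr htop hmin hz₀ hlt
  linarith
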